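/- arXiv:1503.07627 — 5 statements merged into one kernel-verified Lean document; each statement's English description precedes it below -/
import Mathlib

section
/- Let B be a countable Boolean algebra with Stone space S(B). The map assigning to a Borel probability measure μ on S(B) the function f_μ : B → [0,1] defined by f_μ(b) = μ(K(b)) is a bijection between the set of Borel probability measures on S(B) and the set of functions f : B → [0,1] satisfying f(⊤) = 1 and f(b ∨ c) = f(b) + f(c) whenever b ∧ c = ⊥. -/
open Filter Topology

/-- The Stone space of a Boolean algebra: the space of Boolean-algebra homomorphisms to the
two-element Boolean algebra, as a subspace of the product space `B → Bool`. -/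
def StoneSpace (B : Type*) [BooleanAlgebra B] : Type _ :=
  {f : B → Bool // f ⊤ = true ∧ f ⊥ = false ∧
    (∀ a b, f (a ⊔ b) = (f a || f b)) ∧ (∀ a b, f (a ⊓ b) = (f a && f b))}

instance (B : Type*) [BooleanAlgebra B] : TopologicalSpace (StoneSpace B) :=
  instTopologicalSpaceSubtype

noncomputable instance (B : Type*) [BooleanAlgebra B] : MeasurableSpace (StoneSpace B) :=
  borel (StoneSpace B)

instance (B : Type*) [BooleanAlgebra B] : BorelSpace (StoneSpace B) := ⟨rfl⟩

/-- the basic clopen set of the Stone space associated to an element of the Boolean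
algebra -/
def stoneClopen {B : Type*} [BooleanAlgebra B] (b : B) : Set (StoneSpace B) :=
  {h | h.1 b = true}

/-!
The clopens `K b` form a basis of the Stone space which is closed under finite intersections
and countable when `B` is, so they generate the Borel σ-algebra and a probability measure is
determined by its values on them (uniqueness of measures agreeing on a π-system).

For existence, approximate a compact set `C` from outside by `λ C = inf {f b | C ⊆ K b}`. Two
disjoint compact sets are separated by some `K b`, which makes `λ` additive on them: `λ` is a
content and induces a regular Borel measure. Since `K` is an order embedding (the Boolean prime
ideal theorem), `λ (K b) = f b`, and since `K b` is compact and open the measure of `K b` is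
`λ (K b)`.
-/

open MeasureTheory Topology TopologicalSpace NNReal

namespace StoneSpace

variable {B : Type*} [BooleanAlgebra B]

def toHom (x : StoneSpace B) : BoundedLatticeHom B Bool where
  toFun := x.1
  map_sup' := x.2.2.2.1
  map_inf' := x.2.2.2.2
  map_top' := x.2.1
  map_bot' := x.2.2.1

@[simp] lemma toHom_apply (x : StoneSpace B) (b : B) : x.toHom b = x.1 b := rfl

lemma mem_stoneClopen {x : StoneSpace B} {b : B} : x ∈ stoneClopen b ↔ x.1 b = true := Iff.rfl

def stoneClopenHom : BoundedLatticeHom B (Set (StoneSpace B)) where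
  toFun := stoneClopen
  map_sup' a b := by ext x; simp [mem_stoneClopen, ← toHom_apply]
  map_inf' a b := by ext x; simp [mem_stoneClopen, ← toHom_apply]
  map_top' := by ext x; simp [mem_stoneClopen, ← toHom_apply]
  map_bot' := by ext x; simp [mem_stoneClopen, ← toHom_apply]

@[simp] lemma stoneClopenHom_apply (b : B) : stoneClopenHom b = stoneClopen b := rfl

@[simp] lemma stoneClopen_top : stoneClopen (⊤ : B) = Set.univ := map_top stoneClopenHom
@[simp] lemma stoneClopen_bot : stoneClopen (⊥ : B) = ∅ := map_bot stoneClopenHom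
@[simp] lemma stoneClopen_sup (a b : B) : stoneClopen (a ⊔ b) = stoneClopen a ∪ stoneClopen b :=
  map_sup stoneClopenHom a b
@[simp] lemma stoneClopen_inf (a b : B) : stoneClopen (a ⊓ b) = stoneClopen a ∩ stoneClopen b :=
  map_inf stoneClopenHom a b
@[simp] lemma stoneClopen_compl (b : B) : stoneClopen bᶜ = (stoneClopen b)ᶜ :=
  map_compl' stoneClopenHom b

lemma stoneClopen_finsetSup {ι : Type*} (s : Finset ι) (g : ι → B) :
    stoneClopen (s.sup g) = ⋃ i ∈ s, stoneClopen (g i) := by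
  rw [← stoneClopenHom_apply, map_finset_sup, Finset.sup_set_eq_biUnion]
  rfl

lemma stoneClopen_finsetInf {ι : Type*} (s : Finset ι) (g : ι → B) :
    stoneClopen (s.inf g) = ⋂ i ∈ s, stoneClopen (g i) := by
  rw [← stoneClopenHom_apply, map_finset_inf, Finset.inf_set_eq_iInter]
  rfl

/-- Boolean prime ideal theorem: `a` lies outside some prime ideal `J`, and `x ↦ decide (x ∉ J)` is
a point of the Stone space. -/
lemma stoneClopen_nonempty {a : B} (ha : a ≠ ⊥) : (stoneClopen a).Nonempty := by
  classical
  have hdisj : Disjoint (Order.PFilter.principal a : Set B)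
      (Order.Ideal.principal (⊥ : B) : Set B) :=
    Set.disjoint_left.mpr fun x hax hx => ha (le_bot_iff.mp (le_trans hax hx))
  obtain ⟨J, hJ, -, hJa⟩ := DistribLattice.prime_ideal_of_disjoint_filter_ideal hdisj
  have haJ : a ∉ J := Set.disjoint_left.mp hJa (Order.PFilter.mem_principal.mpr le_rfl)
  have hinf (x y : B) : x ⊓ y ∈ J ↔ x ∈ J ∨ y ∈ J :=
    ⟨hJ.mem_or_mem, fun h => h.elim (J.lower inf_le_left) (J.lower inf_le_right)⟩
  refine ⟨⟨fun x => decide (x ∉ J), ?_, ?_, ?_, ?_⟩, decide_eq_true haJ⟩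
  · simp [hJ.top_notMem]
  · simp [J.bot_mem]
  · intro x y
    simp only [Order.Ideal.sup_mem_iff, not_and_or, Bool.decide_or]
  · intro x y
    simp only [hinf, not_or, Bool.decide_and]

lemma stoneClopen_subset_stoneClopen_iff {a b : B} : stoneClopen a ⊆ stoneClopen b ↔ a ≤ b := by
  refine ⟨fun h => ?_, fun h => OrderHomClass.mono stoneClopenHom h⟩
  by_contra hab
  obtain ⟨x, hx⟩ := stoneClopen_nonempty (a := a \ b) (mt sdiff_eq_bot_iff.mp hab)
  rw [sdiff_eq, stoneClopen_inf, stoneClopen_compl] at hx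
  exact hx.2 (h hx.1)

lemma isEmbedding_val : IsEmbedding (Subtype.val : StoneSpace B → B → Bool) :=
  IsEmbedding.subtypeVal

lemma isClosed_range_val : IsClosed (Set.range (Subtype.val : StoneSpace B → B → Bool)) := by
  have hclosed (a b c : B) (op : Bool → Bool → Bool) :
      IsClosed {f : B → Bool | f c = op (f a) (f b)} :=
    isClosed_eq (continuous_apply c) <| continuous_of_discreteTopology.comp
      (f := fun f : B → Bool => (f a, f b)) (g := fun p => op p.1 p.2)
      ((continuous_apply a).prodMk (continuous_apply b))
  rw [Subtype.range_coe_subtype]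
  simp only [Set.ofPred_and, Set.ofPred_forall]
  exact (hclosed ⊤ ⊤ ⊤ fun _ _ => true).inter <| (hclosed ⊥ ⊥ ⊥ fun _ _ => false).inter <|
    (isClosed_iInter fun a => isClosed_iInter fun b => hclosed a b (a ⊔ b) (· || ·)).inter
      (isClosed_iInter fun a => isClosed_iInter fun b => hclosed a b (a ⊓ b) (· && ·))

instance : CompactSpace (StoneSpace B) :=
  IsClosedEmbedding.compactSpace ⟨isEmbedding_val, isClosed_range_val⟩

instance : T2Space (StoneSpace B) := isEmbedding_val.t2Space

instance [Countable B] : SecondCountableTopology (StoneSpace B) :=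
  isEmbedding_val.secondCountableTopology

lemma isClopen_stoneClopen (b : B) : IsClopen (stoneClopen b) :=
  (isClopen_discrete {true}).preimage ((continuous_apply b).comp continuous_subtype_val)

lemma isTopologicalBasis_stoneClopen :
    IsTopologicalBasis (Set.range (stoneClopen : B → Set (StoneSpace B))) := by
  classical
  refine isTopologicalBasis_of_isOpen_of_nhds
    (by rintro _ ⟨b, rfl⟩; exact (isClopen_stoneClopen b).isOpen) fun x U hxU hU => ?_
  obtain ⟨V, hV, rfl⟩ := isOpen_induced_iff.mp hU
  obtain ⟨I, u, hu, hIu⟩ := isOpen_pi_iff.mp hV x.1 hxU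
  let literal (i : B) : B := if x.1 i then i else iᶜ
  have mem_literal (y : StoneSpace B) (i : B) : y ∈ stoneClopen (literal i) ↔ y.1 i = x.1 i := by
    by_cases hi : x.1 i <;> simp [literal, hi, mem_stoneClopen]
  refine ⟨stoneClopen (I.inf literal), ⟨_, rfl⟩, ?_, fun y hy => hIu fun i hi => ?_⟩
  · simp [stoneClopen_finsetInf, mem_literal]
  · rw [stoneClopen_finsetInf, Set.mem_iInter₂] at hy
    exact (mem_literal y i).mp (hy i hi) ▸ (hu i hi).2

lemma exists_stoneClopen_between {S U : Set (StoneSpace B)} (hS : IsCompact S) (hU : IsOpen U)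
    (hSU : S ⊆ U) : ∃ b, S ⊆ stoneClopen b ∧ stoneClopen b ⊆ U := by
  have hbasis (x : StoneSpace B) (hx : x ∈ S) : ∃ b, x ∈ stoneClopen b ∧ stoneClopen b ⊆ U := by
    obtain ⟨_, ⟨b, rfl⟩, hxb, hbU⟩ :=
      isTopologicalBasis_stoneClopen.exists_subset_of_mem_open (hSU hx) hU
    exact ⟨b, hxb, hbU⟩
  choose c hxc hcU using hbasis
  obtain ⟨t, hSt⟩ := hS.elim_nhds_subcover' (fun x hx => stoneClopen (c x hx))
    fun x hx => (isClopen_stoneClopen _).isOpen.mem_nhds (hxc x hx)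
  refine ⟨t.sup fun x => c x x.2, ?_, ?_⟩ <;> rw [stoneClopen_finsetSup]
  · exact hSt
  · exact Set.iUnion₂_subset fun x _ => hcU x x.2

lemma exists_stoneClopen_separating {S T : Set (StoneSpace B)} (hS : IsCompact S)
    (hT : IsCompact T) (hST : Disjoint S T) : ∃ b, S ⊆ stoneClopen b ∧ T ⊆ stoneClopen bᶜ := by
  obtain ⟨b, hSb, hbT⟩ :=
    exists_stoneClopen_between hS hT.isClosed.isOpen_compl hST.subset_compl_right
  exact ⟨b, hSb, by rw [stoneClopen_compl]; exact Set.subset_compl_comm.mp hbT⟩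

end StoneSpace

structure IsFinitelyAdditiveProbability {B : Type*} [BooleanAlgebra B] (f : B → ℝ) : Prop where
  map_top : f ⊤ = 1
  mem_Icc (b : B) : f b ∈ Set.Icc (0 : ℝ) 1
  map_sup_of_inf_eq_bot {b c : B} : b ⊓ c = ⊥ → f (b ⊔ c) = f b + f c

namespace IsFinitelyAdditiveProbability

variable {B : Type*} [BooleanAlgebra B] {f : B → ℝ}

lemma nonneg (hf : IsFinitelyAdditiveProbability f) (b : B) : 0 ≤ f b := (hf.mem_Icc b).1

lemma map_inf_add_map_sdiff (hf : IsFinitelyAdditiveProbability f) (a b : B) :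
    f (a ⊓ b) + f (a \ b) = f a := by
  rw [← hf.map_sup_of_inf_eq_bot (inf_inf_sdiff a b), sup_inf_sdiff]

lemma monotone (hf : IsFinitelyAdditiveProbability f) : Monotone f := fun b c hbc => by
  have h := hf.map_inf_add_map_sdiff c b
  rw [inf_of_le_right hbc] at h
  linarith [hf.nonneg (c \ b)]

lemma map_sup_le (hf : IsFinitelyAdditiveProbability f) (b c : B) : f (b ⊔ c) ≤ f b + f c := by
  have h := hf.map_inf_add_map_sdiff (b ⊔ c) b
  rw [inf_of_le_right le_sup_left, sup_sdiff_left_self] at h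
  linarith [hf.monotone (sdiff_le : c \ b ≤ c)]

end IsFinitelyAdditiveProbability

namespace StoneSpace

variable {B : Type*} [BooleanAlgebra B] {f : B → ℝ}

instance (S : Set (StoneSpace B)) : Nonempty {b : B // S ⊆ stoneClopen b} :=
  ⟨⟨⊤, stoneClopen_top (B := B) ▸ Set.subset_univ S⟩⟩

noncomputable def outerContent (f : B → ℝ) (S : Set (StoneSpace B)) : ℝ≥0 :=
  ⨅ b : {b : B // S ⊆ stoneClopen b}, (f b).toNNReal

lemma outerContent_le (f : B → ℝ) {S : Set (StoneSpace B)} {b : B} (h : S ⊆ stoneClopen b) :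
    outerContent f S ≤ (f b).toNNReal :=
  ciInf_le (f := fun c : {c : B // S ⊆ stoneClopen c} => (f c).toNNReal) (OrderBot.bddBelow _) ⟨b, h⟩

lemma le_outerContent {S : Set (StoneSpace B)} {r : ℝ≥0}
    (h : ∀ b, S ⊆ stoneClopen b → r ≤ (f b).toNNReal) : r ≤ outerContent f S :=
  le_ciInf fun b => h b b.2

lemma outerContent_mono (f : B → ℝ) {S T : Set (StoneSpace B)} (h : S ⊆ T) :
    outerContent f S ≤ outerContent f T :=
  le_outerContent fun _ hb => outerContent_le f (h.trans hb)

lemma outerContent_stoneClopen (hf : Monotone f) (b : B) :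
    outerContent f (stoneClopen b) = (f b).toNNReal :=
  le_antisymm (outerContent_le f subset_rfl) <| le_outerContent fun _ hc =>
    Real.toNNReal_mono (hf (stoneClopen_subset_stoneClopen_iff.mp hc))

lemma outerContent_union_le (hf : IsFinitelyAdditiveProbability f) (S T : Set (StoneSpace B)) :
    outerContent f (S ∪ T) ≤ outerContent f S + outerContent f T :=
  NNReal.le_iInf_add_iInf fun b c => calc
    outerContent f (S ∪ T) ≤ (f (b ⊔ c)).toNNReal :=
      outerContent_le f (by rw [stoneClopen_sup]; exact Set.union_subset_union b.2 c.2)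
    _ ≤ (f b + f c).toNNReal := Real.toNNReal_mono (hf.map_sup_le b c)
    _ ≤ (f b).toNNReal + (f c).toNNReal := Real.toNNReal_add_le

lemma outerContent_union_of_disjoint (hf : IsFinitelyAdditiveProbability f)
    {S T : Set (StoneSpace B)} (hS : IsCompact S) (hT : IsCompact T) (hST : Disjoint S T) :
    outerContent f (S ∪ T) = outerContent f S + outerContent f T := by
  refine le_antisymm (outerContent_union_le hf S T) (le_outerContent fun c hc => ?_)
  obtain ⟨b, hSb, hTb⟩ := exists_stoneClopen_separating hS hT hST
  have hS' : S ⊆ stoneClopen (c ⊓ b) := by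
    rw [stoneClopen_inf]; exact Set.subset_inter (Set.subset_union_left.trans hc) hSb
  have hT' : T ⊆ stoneClopen (c \ b) := by
    rw [sdiff_eq, stoneClopen_inf]; exact Set.subset_inter (Set.subset_union_right.trans hc) hTb
  calc outerContent f S + outerContent f T
      ≤ (f (c ⊓ b)).toNNReal + (f (c \ b)).toNNReal :=
        add_le_add (outerContent_le f hS') (outerContent_le f hT')
    _ = (f c).toNNReal := by
      rw [← Real.toNNReal_add (hf.nonneg _) (hf.nonneg _), hf.map_inf_add_map_sdiff]

noncomputable def contentOf (hf : IsFinitelyAdditiveProbability f) : Content (StoneSpace B) where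
  toFun K := outerContent f K
  mono' _ _ := outerContent_mono f
  sup_disjoint' K₁ K₂ hK _ _ := outerContent_union_of_disjoint hf K₁.isCompact K₂.isCompact hK
  sup_le' K₁ K₂ := outerContent_union_le hf K₁ K₂

lemma contentOf_measure_stoneClopen (hf : IsFinitelyAdditiveProbability f) (b : B) :
    (contentOf hf).measure (stoneClopen b) = ENNReal.ofReal (f b) := by
  have hb := isClopen_stoneClopen b
  rw [Content.measure_apply _ hb.isOpen.measurableSet, Content.outerMeasure_of_isOpen _ _ hb.isOpen,
    Content.innerContent_of_isCompact _ hb.isClosed.isCompact hb.isOpen]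
  exact congrArg _ (outerContent_stoneClopen hf.monotone b)

lemma exists_isProbabilityMeasure_stoneClopen (hf : IsFinitelyAdditiveProbability f) :
    ∃ μ : Measure (StoneSpace B), IsProbabilityMeasure μ ∧ ∀ b, (μ (stoneClopen b)).toReal = f b :=
  ⟨(contentOf hf).measure,
    ⟨by rw [← stoneClopen_top, contentOf_measure_stoneClopen, hf.map_top, ENNReal.ofReal_one]⟩,
    fun b => by rw [contentOf_measure_stoneClopen, ENNReal.toReal_ofReal (hf.nonneg b)]⟩

lemma isFinitelyAdditiveProbability_measure_stoneClopen (μ : Measure (StoneSpace B))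
    [IsProbabilityMeasure μ] : IsFinitelyAdditiveProbability fun b => (μ (stoneClopen b)).toReal where
  map_top := by simp
  mem_Icc b := ⟨ENNReal.toReal_nonneg, measureReal_le_one⟩
  map_sup_of_inf_eq_bot {b c} h := by
    have hdisj : Disjoint (stoneClopen b) (stoneClopen c) := by
      rw [Set.disjoint_iff_inter_eq_empty, ← stoneClopen_inf, h, stoneClopen_bot]
    rw [stoneClopen_sup, measure_union hdisj (isClopen_stoneClopen c).isOpen.measurableSet,
      ENNReal.toReal_add (measure_ne_top _ _) (measure_ne_top _ _)]

lemma ext_of_stoneClopen [Countable B] {μ ν : Measure (StoneSpace B)} [IsFiniteMeasure μ]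
    (h : ∀ b, μ (stoneClopen b) = ν (stoneClopen b)) : μ = ν := by
  refine ext_of_generate_finite _ isTopologicalBasis_stoneClopen.borel_eq_generateFrom ?_
    (Set.forall_mem_range.mpr h) (by simpa using h ⊤)
  rintro _ ⟨b, rfl⟩ _ ⟨c, rfl⟩ -
  exact ⟨b ⊓ c, stoneClopen_inf b c⟩

end StoneSpace

open StoneSpace in
/-- for a countable Boolean algebra B, the map μ ↦ (b ↦ μ(K(b))) is a bijection
between Borel probability measures on the Stone space of B and the [0,1]-valued functions f
on B with f(⊤) = 1 which are additive on disjoint pairs. -/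
theorem stmt0 (B : Type*) [BooleanAlgebra B] [Countable B] :
    Set.BijOn
      (fun (μ : MeasureTheory.ProbabilityMeasure (StoneSpace B)) (b : B) =>
        ((μ : MeasureTheory.Measure (StoneSpace B)) (stoneClopen b)).toReal)
      Set.univ
      {f : B → ℝ | f ⊤ = 1 ∧ (∀ b, f b ∈ Set.Icc (0 : ℝ) 1) ∧
        ∀ b c, b ⊓ c = ⊥ → f (b ⊔ c) = f b + f c} := by
  refine ⟨fun μ _ => ?_, fun μ _ ν _ hμν => ?_, fun f hf => ?_⟩
  · have hμ := isFinitelyAdditiveProbability_measure_stoneClopen (μ : Measure (StoneSpace B))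
    exact ⟨hμ.map_top, hμ.mem_Icc, fun _ _ => hμ.map_sup_of_inf_eq_bot⟩
  · refine ProbabilityMeasure.toMeasure_injective (ext_of_stoneClopen fun b => ?_)
    exact (ENNReal.toReal_eq_toReal_iff' (measure_ne_top _ _) (measure_ne_top _ _)).mp
      (congrFun hμν b)
  · obtain ⟨μ, hμ, hμf⟩ := exists_isProbabilityMeasure_stoneClopen ⟨hf.1, hf.2.1, hf.2.2 _ _⟩
    exact ⟨⟨μ, hμ⟩, trivial, funext hμf⟩
end

section
/- For every first-order sentence θ over a countable relational language L there exist integers r, m and a local first-order formula φ(x) with a single free variable such that for every finite vertex-transitive L-structure A containing at least m elements pairwise at Gaifman distance greater than 2r, the following are equivalent: A ⊨ θ; A ⊨ ∃x φ(x); A ⊨ ∀x φ(x); ⟨φ,A⟩ = 1. -/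
/-!
Distances are taken in the Gaifman graph of the relation symbols occurring in `θ`, which is
first-order definable even when `L` is infinite. Translate `θ` into `φ(x)` by guarding every
quantifier: a quantified variable either lies within `2 ^ d` (`d` the quantifier depth below it)
of an earlier variable, joining that variable's cluster, or it opens a new cluster and lies within
`2 ^ d` of `x`. Atomic formulas relating different clusters are replaced by `⊥`.

In a vertex-transitive structure with at least `depth θ` points that are pairwise
`2 * 2 ^ depth θ`-far apart, an assignment of `θ`'s variables is simulated cluster by cluster,
each cluster moved by its own automorphism: a new real cluster is placed next to a far point,
which an automorphism carries to `a`, so real clusters stay `2 ^ d`-far apart and no atomic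
formula relates two of them. Hence `θ` holds iff `φ(a)` holds, for every `a`. The variables of
`φ`, and the walks its guards speak about, stay within `depth θ * 2 ^ depth θ + 1` of `x`, so `φ`
is local; and as `φ(a)` does not depend on `a`, the four conditions coincide.
-/

open FirstOrder Filter Topology

/-- Stone pairing -/
noncomputable def stonePairing (L : FirstOrder.Language) (A : Type*) [L.Structure A] {p : ℕ}
    (φ : L.Formula (Fin p)) : ℝ :=
  (Nat.card {v : Fin p → A // φ.Realize v} : ℝ) / (Nat.card A : ℝ) ^ p

/-- Gaifman graph -/
def gaifmanGraph (L : FirstOrder.Language) (A : Type*) [L.Structure A] : SimpleGraph A where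
  Adj a b := a ≠ b ∧ ∃ (n : ℕ) (r : L.Relations n) (t : Fin n → A),
    Language.Structure.RelMap r t ∧ (∃ i, t i = a) ∧ (∃ j, t j = b)
  symm := by
    constructor
    rintro a b ⟨hne, n, r, t, hr, hi, hj⟩
    exact ⟨hne.symm, n, r, t, hr, hj, hi⟩
  loopless := by
    constructor
    rintro a ⟨hne, -⟩
    exact hne rfl

/-- ball of radius t around range of v in Gaifman graph -/
def ballSet (L : FirstOrder.Language) {A : Type*} [L.Structure A] {p : ℕ}
    (v : Fin p → A) (t : ℕ) : Set A :=
  {a | ∃ (i : Fin p) (w : (gaifmanGraph L A).Walk (v i) a), w.length ≤ t}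

lemma mem_ballSet_self (L : FirstOrder.Language) {A : Type*} [L.Structure A] {p : ℕ}
    (v : Fin p → A) (t : ℕ) (i : Fin p) : v i ∈ ballSet L v t :=
  ⟨i, SimpleGraph.Walk.nil, Nat.zero_le t⟩

/-- induced structure on a subset, for a relational language -/
def inducedStructure (L : FirstOrder.Language) [L.IsRelational] {A : Type*} [L.Structure A]
    (s : Set A) : L.Structure s where
  funMap := fun f => isEmptyElim f
  RelMap := fun r x => Language.Structure.RelMap r (fun i => (x i : A))

/-- t-locality -/
def IsTLocal (L : FirstOrder.Language) [L.IsRelational] {p : ℕ} (φ : L.Formula (Fin p))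
    (t : ℕ) : Prop :=
  ∀ (A : Type) [L.Structure A] (v : Fin p → A),
    (φ.Realize v ↔
      (letI := inducedStructure L (ballSet L v t)
       φ.Realize (fun i => (⟨v i, mem_ballSet_self L v t i⟩ : ballSet L v t))))

def IsLocal (L : FirstOrder.Language) [L.IsRelational] {p : ℕ} (φ : L.Formula (Fin p)) : Prop :=
  ∃ t, IsTLocal L φ t

def VertexTransitive (L : FirstOrder.Language) (A : Type*) [L.Structure A] : Prop :=
  ∀ a b : A, ∃ e : A ≃[L] A, e a = b

/-- no walk of length at most d joins a and b (i.e. Gaifman distance > d) -/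
def FarApart (L : FirstOrder.Language) {A : Type*} [L.Structure A] (a b : A) (d : ℕ) : Prop :=
  ¬ ∃ w : (gaifmanGraph L A).Walk a b, w.length ≤ d

namespace Gaifman

open FirstOrder Language Structure BoundedFormula

variable {L : Language} {M N : Type*} [L.Structure M] [L.Structure N]
  {l : List (Σ n, L.Relations n)}

/-- Gaifman adjacency of the reduct to the relation symbols in `l`, loops allowed. -/
def RelAdj (l : List (Σ n, L.Relations n)) (x y : M) : Prop :=
  ∃ R ∈ l, ∃ t : Fin R.1 → M, RelMap R.2 t ∧ x ∈ Set.range t ∧ y ∈ Set.range t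

def RelNear (l : List (Σ n, L.Relations n)) : ℕ → M → M → Prop
  | 0, x, y => x = y
  | d + 1, x, y => RelNear l d x y ∨ ∃ z, RelAdj l x z ∧ RelNear l d z y

theorem RelAdj.symm {x y : M} (h : RelAdj l x y) : RelAdj l y x := by
  obtain ⟨R, hR, t, ht, hx, hy⟩ := h
  exact ⟨R, hR, t, ht, hy, hx⟩

theorem RelAdj.map (f : M →[L] N) {x y : M} (h : RelAdj l x y) : RelAdj l (f x) (f y) := by
  obtain ⟨R, hR, t, ht, ⟨i, rfl⟩, ⟨j, rfl⟩⟩ := h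
  exact ⟨R, hR, f ∘ t, f.map_rel R.2 t ht, ⟨i, rfl⟩, ⟨j, rfl⟩⟩

namespace RelNear

theorem refl (d : ℕ) (x : M) : RelNear l d x x := by
  induction d with
  | zero => rfl
  | succ d ih => exact Or.inl ih

theorem of_relAdj {x y : M} (h : RelAdj l x y) : RelNear l 1 x y :=
  Or.inr ⟨y, h, rfl⟩

theorem mono {d d' : ℕ} (hd : d ≤ d') {x y : M} (h : RelNear l d x y) : RelNear l d' x y := by
  induction hd with
  | refl => exact h
  | step _ ih => exact Or.inl ih

theorem trans {d₁ d₂ : ℕ} {x y z : M} (h₁ : RelNear l d₁ x y) (h₂ : RelNear l d₂ y z) :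
    RelNear l (d₁ + d₂) x z := by
  induction d₁ generalizing x with
  | zero => exact (h₁ : x = y) ▸ h₂.mono (by omega)
  | succ d ih =>
    rw [Nat.add_right_comm]
    rcases h₁ with h₁ | ⟨w, hxw, hwy⟩
    · exact Or.inl (ih h₁)
    · exact Or.inr ⟨w, hxw, ih hwy⟩

theorem symm {d : ℕ} {x y : M} (h : RelNear l d x y) : RelNear l d y x := by
  induction d generalizing x y with
  | zero => exact Eq.symm h
  | succ d ih =>
    rcases h with h | ⟨z, hxz, hzy⟩
    · exact Or.inl (ih h)
    · exact (ih hzy).trans (of_relAdj hxz.symm)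

theorem symm_iff {d : ℕ} {x y : M} : RelNear l d x y ↔ RelNear l d y x :=
  ⟨symm, symm⟩

theorem map (f : M →[L] N) {d : ℕ} {x y : M} (h : RelNear l d x y) :
    RelNear l d (f x) (f y) := by
  induction d generalizing x with
  | zero => exact congrArg f h
  | succ d ih =>
    rcases h with h | ⟨z, hxz, hzy⟩
    · exact Or.inl (ih h)
    · exact Or.inr ⟨f z, hxz.map f, ih hzy⟩

theorem map_equiv_iff (e : M ≃[L] N) {d : ℕ} {x y : M} :
    RelNear l d (e x) (e y) ↔ RelNear l d x y :=
  ⟨fun h => by simpa using h.map e.symm.toHom, map e.toHom⟩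

theorem exists_walk {d : ℕ} {x y : M} (h : RelNear l d x y) :
    ∃ w : (gaifmanGraph L M).Walk x y, w.length ≤ d := by
  induction d generalizing x with
  | zero => exact (h : x = y) ▸ ⟨.nil, le_rfl⟩
  | succ d ih =>
    rcases h with h | ⟨z, ⟨R, -, t, ht, hx, hz⟩, hzy⟩
    · obtain ⟨w, hw⟩ := ih h
      exact ⟨w, by omega⟩
    · obtain ⟨w, hw⟩ := ih hzy
      by_cases hxz : x = z
      · exact hxz ▸ ⟨w, by omega⟩
      · exact ⟨.cons ⟨hxz, R.1, R.2, t, ht, hx, hz⟩ w, Nat.succ_le_succ hw⟩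

theorem mem_ballSet {p : ℕ} {v : Fin p → M} {i : Fin p} {d T : ℕ} {u : M}
    (h : RelNear l d (v i) u) (hdT : d ≤ T) : u ∈ ballSet L v T :=
  let ⟨w, hw⟩ := h.exists_walk
  ⟨i, w, hw.trans hdT⟩

end RelNear

theorem relNear_optionElim {r k : ℕ} {x : M} {w : Fin k → M}
    (hw : ∀ i, RelNear l r x (w i)) (j : Option (Fin k)) : RelNear l r x (j.elim x w) := by
  cases j
  exacts [RelNear.refl _ _, hw _]

open Classical in
noncomputable def relAdjFormula (l : List (Σ n, L.Relations n)) : L.Formula (Fin 2) :=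
  Formula.iSup fun R : {R // R ∈ l} => Formula.iExs (Fin R.1.1) <|
    R.1.2.formula (fun i => Term.var (Sum.inr i)) ⊓
      (Formula.iSup fun i => (Term.var (Sum.inr i)).equal (Term.var (Sum.inl 0))) ⊓
      (Formula.iSup fun i => (Term.var (Sum.inr i)).equal (Term.var (Sum.inl 1)))

theorem realize_relAdjFormula (v : Fin 2 → M) :
    (relAdjFormula l).Realize v ↔ RelAdj l (v 0) (v 1) := by
  simp only [relAdjFormula, RelAdj, Formula.realize_iSup, Formula.realize_iExs,
    Formula.realize_inf, Formula.realize_rel, Formula.realize_equal, Term.realize_var,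
    Sum.elim_inr, Sum.elim_inl, Set.mem_range, Subtype.exists, exists_prop, and_assoc]

noncomputable def relNearFormula (l : List (Σ n, L.Relations n)) : ℕ → L.Formula (Fin 2)
  | 0 => (Term.var 0).equal (Term.var 1)
  | d + 1 => relNearFormula l d ⊔ Formula.iExs (Fin 1)
      ((relAdjFormula l).relabel ![Sum.inl 0, Sum.inr 0] ⊓
        (relNearFormula l d).relabel ![Sum.inr 0, Sum.inl 1])

theorem realize_relNearFormula (d : ℕ) (v : Fin 2 → M) :
    (relNearFormula l d).Realize v ↔ RelNear l d (v 0) (v 1) := by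
  induction d generalizing v with
  | zero => simp [relNearFormula, RelNear]
  | succ d ih =>
    simp only [relNearFormula, RelNear, Formula.realize_sup, Formula.realize_iExs,
      Formula.realize_inf, Formula.realize_relabel, realize_relAdjFormula, ih]
    exact or_congr_right ⟨fun ⟨z, h⟩ => ⟨z 0, h⟩, fun ⟨z, h⟩ => ⟨fun _ => z, h⟩⟩

noncomputable def relNearAt (l : List (Σ n, L.Relations n)) (r : ℕ) {α : Type*} {n : ℕ}
    (s u : α ⊕ Fin n) : L.BoundedFormula α n :=
  BoundedFormula.relabel ![s, u] (relNearFormula l r)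

theorem realize_relNearAt {r : ℕ} {α : Type*} {n : ℕ} (s u : α ⊕ Fin n) (x : α → M)
    (xs : Fin n → M) :
    (relNearAt l r s u).Realize x xs ↔ RelNear l r (Sum.elim x xs s) (Sum.elim x xs u) := by
  have h := realize_relNearFormula (l := l) r (Sum.elim x xs ∘ ![s, u])
  rw [Formula.Realize, Subsingleton.elim default (xs ∘ Fin.natAdd n)] at h
  rw [relNearAt, realize_relabel]
  exact h

/-- `∀ y, ⋀ j, (dist(y, anchor j) ≤ r → φ j)`, where the anchor `none` is the free variable and
`some i` is the bound variable `i`. -/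
noncomputable def guardedAll (l : List (Σ n, L.Relations n)) (r : ℕ) {k : ℕ}
    (φ : Option (Fin k) → L.BoundedFormula (Fin 1) (k + 1)) : L.BoundedFormula (Fin 1) k :=
  (BoundedFormula.iInf fun j => (relNearAt l r (Sum.inr (Fin.last k))
      (j.elim (Sum.inl 0) (Sum.inr ∘ Fin.castSucc))).imp (φ j)).all

theorem realize_guardedAll {r k : ℕ} {φ : Option (Fin k) → L.BoundedFormula (Fin 1) (k + 1)}
    (x : Fin 1 → M) (w : Fin k → M) :
    (guardedAll l r φ).Realize x w ↔
      ∀ y j, RelNear l r y (j.elim (x 0) w) → (φ j).Realize x (Fin.snoc w y) := by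
  have hanchor (y : M) (j : Option (Fin k)) : Sum.elim x (Fin.snoc w y)
      (j.elim (Sum.inl 0) (Sum.inr ∘ Fin.castSucc)) = j.elim (x 0) w := by
    cases j <;> simp
  simp only [guardedAll, realize_all, realize_iInf, realize_imp, realize_relNearAt, hanchor,
    Sum.elim_inr, Fin.snoc_last]

def relSymbols : ∀ {α : Type*} {n : ℕ}, L.BoundedFormula α n → List (Σ n, L.Relations n)
  | _, _, .falsum => []
  | _, _, .equal _ _ => []
  | _, _, .rel R _ => [⟨_, R⟩]
  | _, _, .imp f g => relSymbols f ++ relSymbols g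
  | _, _, .all f => relSymbols f

def quantifierDepth : ∀ {α : Type*} {n : ℕ}, L.BoundedFormula α n → ℕ
  | _, _, .falsum => 0
  | _, _, .equal _ _ => 0
  | _, _, .rel _ _ => 0
  | _, _, .imp f g => max (quantifierDepth f) (quantifierDepth g)
  | _, _, .all f => quantifierDepth f + 1

/-- The new variable starts a cluster of its own (`none`) or joins that of variable `i`. -/
def extendClusters {k : ℕ} (c : Fin k → Fin k) (j : Option (Fin k)) : Fin (k + 1) → Fin (k + 1) :=
  Fin.snoc (Fin.castSucc ∘ c) (j.elim (Fin.last k) (Fin.castSucc ∘ c))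

section Clusters

variable {k : ℕ} {c : Fin k → Fin k} {v : Fin k → M}

def ClustersSeparated (l : List (Σ n, L.Relations n)) (r : ℕ) (c : Fin k → Fin k)
    (v : Fin k → M) : Prop :=
  ∀ i j, c i ≠ c j → ¬ RelNear l r (v i) (v j)

namespace ClustersSeparated

theorem mono {r r' : ℕ} (h : ClustersSeparated l r c v) (hr : r' ≤ r) :
    ClustersSeparated l r' c v :=
  fun i j hij hnear => h i j hij (hnear.mono hr)

theorem snoc {r : ℕ} (h : ClustersSeparated l r c v) (n : Fin (k + 1)) {y : M}
    (hy : ∀ b, n ≠ (c b).castSucc → ¬ RelNear l r y (v b)) :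
    ClustersSeparated l r (Fin.snoc (Fin.castSucc ∘ c) n) (Fin.snoc v y) := by
  intro i i'
  induction i using Fin.lastCases <;> induction i' using Fin.lastCases <;>
    simp only [Fin.snoc_last, Fin.snoc_castSucc, Function.comp_apply, ne_eq,
      Fin.castSucc_inj]
  case last.last => simp
  case last.cast b => exact hy b
  case cast.last b => exact fun hne hnear => hy b (Ne.symm hne) hnear.symm
  case cast.cast b b' => exact h b b'

theorem extend_none {r : ℕ} (h : ClustersSeparated l r c v) {y : M}
    (hy : ∀ i, ¬ RelNear l r y (v i)) :
    ClustersSeparated l r (extendClusters c none) (Fin.snoc v y) :=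
  h.snoc _ fun b _ => hy b

theorem extend_some {r : ℕ} (h : ClustersSeparated l (2 * r) c v) {i : Fin k} {y : M}
    (hy : RelNear l r y (v i)) :
    ClustersSeparated l r (extendClusters c (some i)) (Fin.snoc v y) :=
  (h.mono (by omega)).snoc _ fun b hb hyb =>
    h i b (fun e => hb (congrArg Fin.castSucc e)) ((hy.symm.trans hyb).mono (by omega))

end ClustersSeparated

theorem snoc_apply_extendClusters {E : Type*} [FunLike E M N] (τ : Fin k → E) (e : E)
    (j : Option (Fin k)) (y : M) :
    (fun i => Fin.snoc (α := fun _ => E) τ e (extendClusters c j i)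
        (Fin.snoc (α := fun _ => M) v y i)) =
      Fin.snoc (fun i => τ (c i) (v i)) ((j.elim e (τ ∘ c)) y) := by
  funext i
  induction i using Fin.lastCases <;> cases j <;> simp [extendClusters]

theorem exists_forall_not_relNear {S : Finset M} {r : ℕ} (hS : k < S.card)
    (hfar : (S : Set M).Pairwise fun a b => FarApart L a b (2 * r)) (v : Fin k → M) :
    ∃ s, ∀ i, ¬ RelNear l r s (v i) := by
  by_contra! hnear
  choose f hf using hnear
  obtain ⟨s, hs, s', hs', hne, heq⟩ := Finset.exists_ne_map_eq_of_card_lt_of_maps_to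
    (t := Finset.univ) (by simpa using hS) fun s _ => Finset.mem_univ (f s)
  have hss' : RelNear l (r + r) s s' := (hf s).trans (heq ▸ hf s').symm
  obtain ⟨w, hw⟩ := hss'.exists_walk
  exact hfar hs hs' hne ⟨w, by omega⟩

section VertexTransitive

variable (htrans : VertexTransitive L M) (a : M) {g : ℕ} (τ : Fin k → M ≃[L] M)
include htrans

theorem exists_preimage_of_relNear_anchor (hsep : ClustersSeparated l (2 * g) c v)
    {s : M} (hs : ∀ i, ¬ RelNear l (2 * g) s (v i)) {j : Option (Fin k)} {y' : M}
    (hy' : RelNear l g y' (j.elim a fun i => τ (c i) (v i))) :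
    ∃ e y, (j.elim e (τ ∘ c)) y = y' ∧
      ClustersSeparated l g (extendClusters c j) (Fin.snoc v y) := by
  cases j with
  | none =>
    obtain ⟨e, rfl⟩ := htrans s a
    refine ⟨e, e.symm y', by simp, (hsep.mono (by omega)).extend_none fun i hi => hs i ?_⟩
    have hys : RelNear l g (e.symm y') s := (RelNear.map_equiv_iff e).1 (by simpa using hy')
    exact (hys.symm.trans hi).mono (by omega)
  | some i =>
    refine ⟨τ (c i), (τ (c i)).symm y', by simp, hsep.extend_some ?_⟩
    exact (RelNear.map_equiv_iff (τ (c i))).1 (by simpa using hy')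

theorem exists_image_relNear_anchor (hsep : ClustersSeparated l (2 * g) c v) (y : M) :
    ∃ j e, RelNear l g ((j.elim e (τ ∘ c)) y) (j.elim a fun i => τ (c i) (v i)) ∧
      ClustersSeparated l g (extendClusters c j) (Fin.snoc v y) := by
  by_cases hy : ∃ i, RelNear l g y (v i)
  · obtain ⟨i, hi⟩ := hy
    exact ⟨some i, τ (c i), (RelNear.map_equiv_iff _).2 hi, hsep.extend_some hi⟩
  · rw [not_exists] at hy
    obtain ⟨e, rfl⟩ := htrans y a
    exact ⟨none, e, RelNear.refl g _, (hsep.mono (by omega)).extend_none hy⟩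

end VertexTransitive

end Clusters

section Relational

variable [L.IsRelational]

/-- In a relational language every term is a variable; this is the index of a bound one. -/
def boundVarIndex {k : ℕ} : L.Term (Empty ⊕ Fin k) → Fin k
  | .var (.inl e) => e.elim
  | .var (.inr i) => i
  | .func f _ => isEmptyElim f

theorem realize_eq_boundVarIndex {k : ℕ} (t : L.Term (Empty ⊕ Fin k)) (x : Empty → M)
    (v : Fin k → M) : t.realize (Sum.elim x v) = v (boundVarIndex t) := by
  match t with
  | .var (.inl e) => exact e.elim
  | .var (.inr i) => rfl
  | .func f _ => exact isEmptyElim f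

/-- `c i` is the cluster of the variable `i`. -/
noncomputable def localTranslation (l : List (Σ n, L.Relations n)) :
    ∀ {k : ℕ}, (Fin k → Fin k) → L.BoundedFormula Empty k → L.BoundedFormula (Fin 1) k
  | _, _, .falsum => ⊥
  | _, c, .equal t₁ t₂ =>
      if c (boundVarIndex t₁) = c (boundVarIndex t₂) then
        (Term.var (Sum.inr (boundVarIndex t₁))).bdEqual (Term.var (Sum.inr (boundVarIndex t₂)))
      else ⊥
  | _, c, .rel R ts =>
      if ∀ i j, c (boundVarIndex (ts i)) = c (boundVarIndex (ts j)) then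
        R.boundedFormula fun i => Term.var (Sum.inr (boundVarIndex (ts i)))
      else ⊥
  | _, c, .imp f g => (localTranslation l c f).imp (localTranslation l c g)
  | _, c, .all f => guardedAll l (2 ^ quantifierDepth f) fun j =>
      localTranslation l (extendClusters c j) f

noncomputable def localFormula (θ : L.Sentence) : L.Formula (Fin 1) :=
  localTranslation (relSymbols θ) id θ

section Atomic

variable {k : ℕ} {c : Fin k → Fin k} (a : M) (x : Empty → M) (v : Fin k → M)
  (τ : Fin k → M ≃[L] M)

theorem realize_localTranslation_equal (t₁ t₂ : L.Term (Empty ⊕ Fin k))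
    (hsep : ClustersSeparated l 1 c v) :
    (equal t₁ t₂).Realize x v ↔
      (localTranslation l c (equal t₁ t₂)).Realize (fun _ => a) (fun i => τ (c i) (v i)) := by
  simp only [localTranslation, Realize, realize_eq_boundVarIndex]
  split_ifs with h
  · simp [h]
  · exact iff_of_false (fun he => hsep _ _ h (he ▸ RelNear.refl _ _)) id

theorem realize_localTranslation_rel {m : ℕ} (R : L.Relations m)
    (ts : Fin m → L.Term (Empty ⊕ Fin k)) (hR : ⟨m, R⟩ ∈ l)
    (hsep : ClustersSeparated l 1 c v) :
    (rel R ts).Realize x v ↔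
      (localTranslation l c (rel R ts)).Realize (fun _ => a) (fun i => τ (c i) (v i)) := by
  simp only [localTranslation, Realize, realize_eq_boundVarIndex]
  split_ifs with h
  · obtain ⟨e, he⟩ : ∃ e : M ≃[L] M, ∀ i, τ (c (boundVarIndex (ts i))) = e := by
      rcases isEmpty_or_nonempty (Fin m) with hempty | ⟨⟨i₀⟩⟩
      · exact ⟨.refl L M, isEmptyElim⟩
      · exact ⟨_, fun i => congrArg τ (h i i₀)⟩
    simp only [realize_rel, Term.realize_var, Sum.elim_inr, he]
    exact (e.map_rel R _).symm
  · refine iff_of_false (fun hRel => ?_) id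
    obtain ⟨i, j, hij⟩ : ∃ i j, _ := by simpa only [not_forall] using h
    exact hsep _ _ hij (.of_relAdj ⟨_, hR, _, hRel, ⟨i, rfl⟩, ⟨j, rfl⟩⟩)

end Atomic

/-- `τ` assigns to each cluster the automorphism moving the real assignment `v` onto the
simulated one. -/
theorem realize_iff_realize_localTranslation (htrans : VertexTransitive L M) {D : ℕ}
    {S : Finset M} (hS : D ≤ S.card)
    (hfar : (S : Set M).Pairwise fun a b => FarApart L a b (2 * 2 ^ D)) (a : M) {k : ℕ}
    (ψ : L.BoundedFormula Empty k) (c : Fin k → Fin k) (x : Empty → M) (v : Fin k → M)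
    (τ : Fin k → M ≃[L] M) (hk : k + quantifierDepth ψ ≤ D) (hl : ∀ R ∈ relSymbols ψ, R ∈ l)
    (hsep : ClustersSeparated l (2 ^ quantifierDepth ψ) c v) :
    ψ.Realize x v ↔ (localTranslation l c ψ).Realize (fun _ => a) (fun i => τ (c i) (v i)) := by
  induction ψ with
  | falsum => exact Iff.rfl
  | equal t₁ t₂ =>
    exact realize_localTranslation_equal a x v τ t₁ t₂ (by simpa [quantifierDepth] using hsep)
  | rel R ts =>
    exact realize_localTranslation_rel a x v τ R ts (hl _ (by simp [relSymbols]))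
      (by simpa [quantifierDepth] using hsep)
  | imp f g ihf ihg =>
    simp only [quantifierDepth, relSymbols, List.mem_append] at hk hl hsep
    exact imp_congr (ihf c v τ (by omega) (fun R hR => hl R (.inl hR))
        (hsep.mono (Nat.pow_le_pow_right two_pos (le_max_left _ _))))
      (ihg c v τ (by omega) (fun R hR => hl R (.inr hR))
        (hsep.mono (Nat.pow_le_pow_right two_pos (le_max_right _ _))))
  | @all k f ih =>
    simp only [quantifierDepth, relSymbols, pow_succ'] at hk hl hsep
    obtain ⟨s, hs⟩ := exists_forall_not_relNear (l := l) (show k < S.card by omega) hfar v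
    have hs' : ∀ i, ¬ RelNear l (2 * 2 ^ quantifierDepth f) s (v i) := fun i hi =>
      hs i (hi.mono (by rw [← pow_succ']; exact Nat.pow_le_pow_right two_pos (by omega)))
    have step (j : Option (Fin k)) (e : M ≃[L] M) (y : M)
        (hsep' : ClustersSeparated l (2 ^ quantifierDepth f) (extendClusters c j)
          (Fin.snoc v y)) :
        f.Realize x (Fin.snoc v y) ↔ (localTranslation l (extendClusters c j) f).Realize
          (fun _ => a) (Fin.snoc (fun i => τ (c i) (v i)) ((j.elim e (τ ∘ c)) y)) := by
      rw [← snoc_apply_extendClusters τ e]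
      exact ih _ _ _ (by omega) hl hsep'
    rw [localTranslation, realize_guardedAll, realize_all]
    constructor
    · intro hf y' j hy'
      obtain ⟨e, y, rfl, hsep'⟩ :=
        exists_preimage_of_relNear_anchor htrans a τ hsep hs' hy'
      exact (step j e y hsep').1 (hf y)
    · intro ht y
      obtain ⟨j, e, hy, hsep'⟩ := exists_image_relNear_anchor htrans a τ hsep y
      exact (step j e y hsep').2 (ht _ j hy)

theorem realize_iff_realize_localFormula (htrans : VertexTransitive L M) (θ : L.Sentence)
    {S : Finset M} (hS : quantifierDepth θ ≤ S.card)
    (hfar : (S : Set M).Pairwise fun a b => FarApart L a b (2 * 2 ^ quantifierDepth θ))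
    (a : M) : M ⊨ θ ↔ (localFormula θ).Realize fun _ => a :=
  (realize_iff_realize_localTranslation htrans hS hfar a θ id default default finZeroElim
    (Nat.zero_add _).le (fun _ => id) finZeroElim).trans
    (Iff.of_eq (congrArg _ (Subsingleton.elim _ _)))

section Locality

attribute [local instance] inducedStructure

def subtypeEmbedding (s : Set M) : s ↪[L] M where
  toFun := Subtype.val
  inj' := Subtype.val_injective
  map_fun' f := isEmptyElim f
  map_rel' _ _ := Iff.rfl

/-- Short walks starting near the centre of a large ball stay inside it. -/
theorem relNear_ballSet_iff {p T m d : ℕ} {v : Fin p → M} {i : Fin p} {u w : ballSet L v T}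
    (hu : RelNear l m (v i) u) (hT : m + d + 1 ≤ T) :
    RelNear l d u w ↔ RelNear l d (u : M) w := by
  refine ⟨(RelNear.map (subtypeEmbedding _).toHom ·), fun h => ?_⟩
  induction d generalizing m u with
  | zero => exact Subtype.ext h
  | succ d ih =>
    rcases h with h | ⟨z, ⟨R, hR, t, ht, ⟨i₁, hi₁⟩, ⟨j₁, rfl⟩⟩, hzw⟩
    · exact Or.inl (ih hu (by omega) h)
    · have htu (b : Fin R.1) : RelNear l (m + 1) (v i) (t b) :=
        hu.trans (.of_relAdj ⟨R, hR, t, ht, ⟨i₁, hi₁⟩, ⟨b, rfl⟩⟩)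
      let tB (b : Fin R.1) : ballSet L v T := ⟨t b, (htu b).mem_ballSet (by omega)⟩
      exact Or.inr ⟨tB j₁, ⟨R, hR, tB, ht, ⟨i₁, Subtype.ext hi₁⟩, ⟨j₁, rfl⟩⟩,
        ih (htu j₁) (by omega) hzw⟩

theorem relNear_ballSet_anchor_iff {r g T k : ℕ} {v : Fin 1 → M} {w : Fin k → ballSet L v T}
    (hw : ∀ i, RelNear l r (v 0) (w i)) (hT : r + g + 1 ≤ T) (y : ballSet L v T)
    (j : Option (Fin k)) :
    RelNear l g y (j.elim ⟨v 0, mem_ballSet_self L v T 0⟩ w) ↔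
      RelNear l g (y : M) (j.elim (v 0) (Subtype.val ∘ w)) := by
  have hval : ((j.elim ⟨v 0, mem_ballSet_self L v T 0⟩ w : ballSet L v T) : M) =
      j.elim (v 0) (Subtype.val ∘ w) := by
    cases j <;> rfl
  rw [RelNear.symm_iff, RelNear.symm_iff (x := (y : M)),
    relNear_ballSet_iff (i := 0) (hval ▸ relNear_optionElim hw j) hT, hval]

theorem realize_localTranslation_ballSet_iff {D T : ℕ} (hT : D * 2 ^ D + 1 ≤ T)
    (v : Fin 1 → M) {k : ℕ} (ψ : L.BoundedFormula Empty k) (c : Fin k → Fin k)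
    (w : Fin k → ballSet L v T) (hk : k + quantifierDepth ψ ≤ D)
    (hw : ∀ i, RelNear l (k * 2 ^ D) (v 0) (w i)) :
    (localTranslation l c ψ).Realize v (Subtype.val ∘ w) ↔
      (localTranslation l c ψ).Realize (fun i => ⟨v i, mem_ballSet_self L v T i⟩) w := by
  induction ψ with
  | falsum => exact Iff.rfl
  | equal _ _ | rel _ _ =>
    simp only [localTranslation]
    split_ifs
    · refine IsQF.realize_embedding (.of_isAtomic ?_) (subtypeEmbedding (L := L) _)
        (v := fun i => ⟨v i, mem_ballSet_self L v T i⟩) (xs := w)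
      constructor
    · exact Iff.rfl
  | imp f g ihf ihg =>
    simp only [quantifierDepth] at hk
    simp only [localTranslation, realize_imp]
    exact imp_congr (ihf c w (by omega) hw) (ihg c w (by omega) hw)
  | @all k f ih =>
    simp only [quantifierDepth] at hk
    set g := 2 ^ quantifierDepth f
    have hg : g ≤ 2 ^ D := Nat.pow_le_pow_right two_pos (by omega)
    have hkD : k * 2 ^ D + g ≤ D * 2 ^ D := by nlinarith
    have hih (y : ballSet L v T) (j : Option (Fin k))
        (hy : RelNear l g (y : M) (j.elim (v 0) (Subtype.val ∘ w))) := by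
      refine Fin.comp_snoc Subtype.val w y ▸ ih (extendClusters c j) (Fin.snoc w y) (by omega)
        (Fin.lastCases ?_ fun i => ?_)
      · simpa using ((relNear_optionElim hw j).trans hy.symm).mono
          (by rw [Nat.succ_mul]; gcongr)
      · simpa using (hw i).mono (by rw [Nat.succ_mul]; exact Nat.le_add_right _ _)
    rw [localTranslation, realize_guardedAll, realize_guardedAll]
    constructor
    · intro hA y j hy
      have hy' := (relNear_ballSet_anchor_iff hw (by omega) y j).1 hy
      exact (hih y j hy').1 (hA y j hy')
    · intro hB y j hy
      have hyB : y ∈ ballSet L v T :=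
        RelNear.mem_ballSet (i := 0) ((relNear_optionElim hw j).trans hy.symm) (by omega)
      exact (hih ⟨y, hyB⟩ j hy).2
        (hB _ j ((relNear_ballSet_anchor_iff hw (by omega) ⟨y, hyB⟩ j).2 hy))

theorem isTLocal_localFormula (θ : L.Sentence) :
    IsTLocal L (localFormula θ) (quantifierDepth θ * 2 ^ quantifierDepth θ + 1) := by
  intro A _ v
  have h := realize_localTranslation_ballSet_iff (l := relSymbols θ) (D := quantifierDepth θ)
    le_rfl v θ id default (Nat.zero_add _).le isEmptyElim
  rwa [Subsingleton.elim (Subtype.val ∘ default) default] at h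

end Locality

end Relational

end Gaifman

theorem stonePairing_eq_one_iff {L : FirstOrder.Language} {A : Type*} [L.Structure A] [Finite A]
    [Nonempty A] {p : ℕ} (φ : L.Formula (Fin p)) :
    stonePairing L A φ = 1 ↔ ∀ v : Fin p → A, φ.Realize v := by
  have hcard : (Nat.card A : ℝ) ^ p = Nat.card (Fin p → A) := by simp [Nat.card_fun]
  rw [stonePairing, hcard, div_eq_one_iff_eq (Nat.cast_ne_zero.2 Nat.card_pos.ne'),
    Nat.cast_inj]
  constructor
  · intro h
    by_contra! ⟨v, hv⟩
    exact (Finite.card_subtype_lt hv).ne h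
  · intro h
    exact Nat.card_congr (Equiv.subtypeUnivEquiv h)

theorem stmt6_general (L : FirstOrder.Language) [L.IsRelational]
    (θ : L.Sentence) :
    ∃ (r m : ℕ) (φ : L.Formula (Fin 1)), IsLocal L φ ∧
      ∀ (A : Type) [L.Structure A] [Finite A] [Nonempty A],
        VertexTransitive L A →
        (∃ S : Finset A, m ≤ S.card ∧
          (S : Set A).Pairwise (fun a b => FarApart L a b (2 * r))) →
        ((A ⊨ θ ↔ ∃ a : A, φ.Realize (fun _ => a)) ∧
         (A ⊨ θ ↔ ∀ a : A, φ.Realize (fun _ => a)) ∧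
         (A ⊨ θ ↔ stonePairing L A φ = 1)) := by
  refine ⟨2 ^ Gaifman.quantifierDepth θ, Gaifman.quantifierDepth θ, Gaifman.localFormula θ,
    ⟨_, Gaifman.isTLocal_localFormula θ⟩, fun A _ _ _ htrans ⟨S, hS, hfar⟩ => ?_⟩
  have hiff := Gaifman.realize_iff_realize_localFormula htrans θ hS hfar
  obtain ⟨a₀⟩ := ‹Nonempty A›
  have hall : A ⊨ θ ↔ ∀ a : A, (Gaifman.localFormula θ).Realize fun _ => a :=
    ⟨fun h a => (hiff a).1 h, fun h => (hiff a₀).2 (h a₀)⟩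
  have hconst (v : Fin 1 → A) : v = fun _ => v 0 :=
    funext fun i => congrArg v (Subsingleton.elim i 0)
  refine ⟨⟨fun h => ⟨a₀, (hiff a₀).1 h⟩, fun ⟨a, ha⟩ => (hiff a).2 ha⟩, hall, ?_⟩
  rw [stonePairing_eq_one_iff, hall]
  exact ⟨fun h v => hconst v ▸ h (v 0), fun h a => h _⟩

/-- For every sentence θ over a countable relational language there exist
integers r, m and a local formula φ(x) with a single free variable such that for every
finite vertex-transitive structure A containing at least m elements pairwise at Gaifman
distance greater than 2r, the statements A ⊨ θ, A ⊨ ∃x φ(x), A ⊨ ∀x φ(x) and ⟨φ,A⟩ = 1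
are all equivalent. -/
theorem stmt6 (L : FirstOrder.Language) [Countable L.Symbols] [L.IsRelational]
    (θ : L.Sentence) :
    ∃ (r m : ℕ) (φ : L.Formula (Fin 1)), IsLocal L φ ∧
      ∀ (A : Type) [L.Structure A] [Finite A] [Nonempty A],
        VertexTransitive L A →
        (∃ S : Finset A, m ≤ S.card ∧
          (S : Set A).Pairwise (fun a b => FarApart L a b (2 * r))) →
        ((A ⊨ θ ↔ ∃ a : A, φ.Realize (fun _ => a)) ∧
         (A ⊨ θ ↔ ∀ a : A, φ.Realize (fun _ => a)) ∧
         (A ⊨ θ ↔ stonePairing L A φ = 1)) :=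
  stmt6_general L θ
end

section
/- Let (G_n)_{n∈ℕ} be a sequence of finite nonempty simple graphs, regarded as structures over the language of graphs with one binary relation symbol interpreted as adjacency. Then (t(F,G_n))_n converges for every finite simple graph F if and only if (⟨φ,G_n⟩)_n converges for every quantifier-free first-order formula φ that does not use the equality symbol. -/
/-!
Without equality, a quantifier-free formula `φ(x₁, …, x_p)` cannot tell apart two tuples with the
same adjacency pattern, so whether `v` satisfies `φ` in `G` depends only on the pulled-back graph
`G.comap v` on `Fin p`. By Möbius inversion on the finite poset of graphs on `Fin p`, every function
of this pattern is a linear combination of the up-set indicators `S ≤ G.comap v`, and the tuples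
with `S ≤ G.comap v` are exactly the homomorphisms `S →g G`. Hence each such Stone pairing is a
fixed linear combination of homomorphism densities. Conversely, `t(F, G)` is the Stone pairing of
the conjunction of the edge atoms of `F`.
-/

open Filter Topology

/-- homomorphism density t(F,G) -/
noncomputable def homDensity {W V : Type*} (F : SimpleGraph W) (G : SimpleGraph V) : ℝ :=
  (Nat.card (F →g G) : ℝ) / (Nat.card V : ℝ) ^ (Nat.card W)

open FirstOrder

/-- a bounded formula does not use the equality symbol -/
def NoEq {L : FirstOrder.Language} {α : Type*} : ∀ {n : ℕ}, L.BoundedFormula α n → Prop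
  | _, .falsum => True
  | _, .equal _ _ => False
  | _, .rel _ _ => True
  | _, .imp f g => NoEq f ∧ NoEq g
  | _, .all f => NoEq f

open Language

universe u

theorem span_range_indicator_Ici_eq_top (R α : Type*) [Ring R] [PartialOrder α] [Finite α] :
    Submodule.span R (Set.range fun a : α => (Set.Ici a).indicator (1 : α → R)) = ⊤ := by
  classical
  have := Fintype.ofFinite α
  refine eq_top_iff.2 ((Pi.basisFun R α).span_eq ▸ Submodule.span_le.2 ?_)
  rintro _ ⟨a, rfl⟩
  induction a using WellFoundedGT.induction with
  | _ a ih =>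
    have hsingle : Pi.basisFun R α a =
        (Set.Ici a).indicator 1 - ∑ b ∈ Finset.univ.filter (a < ·), Pi.basisFun R α b := by
      ext x
      rcases eq_or_ne a x with rfl | hax
      · simp [Finset.sum_apply]
      · simp [Finset.sum_apply, Pi.single_apply, hax.symm, Set.indicator, hax.le_iff_lt]
    rw [hsingle]
    exact sub_mem (Submodule.subset_span ⟨a, rfl⟩)
      (Submodule.sum_mem _ fun b hb => ih b (Finset.mem_filter.1 hb).2)

section NoEq

variable {L : Language} {α : Type*} {n : ℕ}

theorem NoEq.not {φ : L.BoundedFormula α n} (h : NoEq φ) : NoEq φ.not := ⟨h, trivial⟩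

theorem noEq_top : NoEq (⊤ : L.BoundedFormula α n) := NoEq.not (φ := ⊥) trivial

theorem NoEq.inf {φ ψ : L.BoundedFormula α n} (hφ : NoEq φ) (hψ : NoEq ψ) : NoEq (φ ⊓ ψ) :=
  NoEq.not ⟨hφ, hψ.not⟩

theorem noEq_iInf {β : Type*} [Finite β] {f : β → L.BoundedFormula α n} (h : ∀ b, NoEq (f b)) :
    NoEq (BoundedFormula.iInf f) := by
  let _ := Fintype.ofFinite β
  suffices ∀ l : List (L.BoundedFormula α n), (∀ φ ∈ l, NoEq φ) → NoEq (l.foldr (· ⊓ ·) ⊤) from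
    this _ (by simpa using h)
  intro l hl
  induction l with
  | nil => exact noEq_top
  | cons φ l ih => exact (hl φ (by simp)).inf (ih fun ψ hψ => hl ψ (by simp [hψ]))

theorem isQF_iInf {β : Type*} [Finite β] {f : β → L.BoundedFormula α n}
    (h : ∀ b, (f b).IsQF) : (BoundedFormula.iInf f).IsQF := by
  let _ := Fintype.ofFinite β
  suffices ∀ l : List (L.BoundedFormula α n), (∀ φ ∈ l, φ.IsQF) → (l.foldr (· ⊓ ·) ⊤).IsQF from
    this _ (by simpa using h)
  intro l hl
  induction l with
  | nil => exact BoundedFormula.IsQF.top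
  | cons φ l ih => exact (hl φ (by simp)).inf (ih fun ψ hψ => hl ψ (by simp [hψ]))

end NoEq

theorem graph_term_eq_var {β : Type*} (t : Language.graph.Term β) : ∃ a, t = Term.var a := by
  cases t with
  | var a => exact ⟨a, rfl⟩
  | func f _ => exact f.elim

theorem realize_iff_of_adj_iff {α M N : Type*} {G : SimpleGraph M} {H : SimpleGraph N}
    {φ : Language.graph.Formula α} (hqf : φ.IsQF) (hne : NoEq φ) {v : α → M} {w : α → N}
    (h : ∀ a b, G.Adj (v a) (v b) ↔ H.Adj (w a) (w b)) :
    (letI := G.structure; φ.Realize v) ↔ (letI := H.structure; φ.Realize w) := by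
  induction hqf with
  | falsum => exact Iff.rfl
  | of_isAtomic hat =>
    cases hat with
    | equal => exact hne.elim
    | rel R ts =>
      cases R
      obtain ⟨a | i, ha⟩ := graph_term_eq_var (ts 0)
      · obtain ⟨b | j, hb⟩ := graph_term_eq_var (ts 1)
        · show G.Adj _ _ ↔ H.Adj _ _
          simpa only [ha, hb, Term.realize_var, Sum.elim_inl] using h a b
        · exact j.elim0
      · exact i.elim0
  | imp _ _ ih₁ ih₂ => exact imp_congr (ih₁ hne.1) (ih₂ hne.2)

theorem card_hom_eq_card_le_comap {W V : Type*} (F : SimpleGraph W) (G : SimpleGraph V) :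
    Nat.card (F →g G) = Nat.card {v : W → V // F ≤ G.comap v} :=
  Nat.card_congr
    { toFun f := ⟨f, f.le_comap⟩
      invFun v := ⟨v.1, (v.2 ·)⟩
      left_inv _ := rfl
      right_inv _ := rfl }

theorem card_comap_mem_eq_sum {W V : Type*} [Fintype W] [DecidableEq W] [Fintype V]
    (G : SimpleGraph V) (𝒮 : Set (SimpleGraph W)) :
    (Nat.card {v : W → V // G.comap v ∈ 𝒮} : ℝ) = ∑ v : W → V, 𝒮.indicator 1 (G.comap v) := by
  classical
  simp [Set.indicator_apply, Nat.card_eq_fintype_card, Fintype.card_subtype]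

def graphsRealizing {α : Type*} (φ : Language.graph.Formula α) : Set (SimpleGraph α) :=
  {H | letI := H.structure; φ.Realize id}

section Densities

variable {V : Type*} [Fintype V] (G : SimpleGraph V) {p : ℕ}

theorem homDensity_eq_sum_indicator (S : SimpleGraph (Fin p)) :
    homDensity S G = (∑ v : Fin p → V, (Set.Ici S).indicator 1 (G.comap v)) / Nat.card V ^ p := by
  rw [homDensity, card_hom_eq_card_le_comap, ← card_comap_mem_eq_sum, Nat.card_fin]
  rfl

theorem stonePairing_eq_sum_indicator (φ : Language.graph.Formula (Fin p)) (hqf : φ.IsQF)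
    (hne : NoEq φ) :
    (letI := G.structure; stonePairing Language.graph V φ) =
      (∑ v : Fin p → V, (graphsRealizing φ).indicator 1 (G.comap v)) /
        Nat.card V ^ p := by
  have hreal (v : Fin p → V) : (letI := G.structure; φ.Realize v) ↔ G.comap v ∈ graphsRealizing φ :=
    realize_iff_of_adj_iff hqf hne fun _ _ => Iff.rfl
  rw [stonePairing, ← card_comap_mem_eq_sum, Nat.card_congr (Equiv.subtypeEquivRight hreal)]

end Densities

theorem exists_stonePairing_eq_sum_homDensity {p : ℕ} (φ : Language.graph.Formula (Fin p))
    (hqf : φ.IsQF) (hne : NoEq φ) :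
    ∃ c : SimpleGraph (Fin p) → ℝ, ∀ (V : Type u) [Finite V] (G : SimpleGraph V),
      (letI := G.structure; stonePairing Language.graph V φ) = ∑ S, c S * homDensity S G := by
  obtain ⟨c, hc⟩ := (Submodule.top_le_span_range_iff_forall_exists_fun ℝ).1
    (span_range_indicator_Ici_eq_top ℝ _).ge ((graphsRealizing φ).indicator 1)
  refine ⟨c, fun V _ G => ?_⟩
  cases nonempty_fintype V
  rw [stonePairing_eq_sum_indicator G φ hqf hne, ← hc]
  simp only [homDensity_eq_sum_indicator, Finset.sum_apply, Pi.smul_apply, smul_eq_mul,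
    Finset.mul_sum, Finset.sum_div, mul_div_assoc]
  exact Finset.sum_comm

namespace SimpleGraph

variable {α : Type*} [Finite α] (F : SimpleGraph α)

noncomputable def edgeFormula : Language.graph.Formula α :=
  Formula.iInf fun e : {q : α × α // F.Adj q.1 q.2} =>
    adj.formula₂ (Term.var e.1.1) (Term.var e.1.2)

theorem isQF_edgeFormula : F.edgeFormula.IsQF :=
  isQF_iInf fun _ => (BoundedFormula.IsAtomic.rel _ _).isQF

theorem noEq_edgeFormula : NoEq F.edgeFormula :=
  noEq_iInf fun _ => trivial

theorem realize_edgeFormula {V : Type*} (G : SimpleGraph V) (v : α → V) :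
    (letI := G.structure; F.edgeFormula.Realize v) ↔ F ≤ G.comap v := by
  let _ := G.structure
  rw [edgeFormula, Formula.realize_iInf]
  exact ⟨fun h i j hij => h ⟨(i, j), hij⟩, fun h e => h e.2⟩

theorem stonePairing_edgeFormula {p : ℕ} (F : SimpleGraph (Fin p)) {V : Type*}
    (G : SimpleGraph V) :
    (letI := G.structure; stonePairing Language.graph V F.edgeFormula) = homDensity F G := by
  rw [stonePairing, homDensity, card_hom_eq_card_le_comap, Nat.card_fin,
    Nat.card_congr (Equiv.subtypeEquivRight (F.realize_edgeFormula G))]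

end SimpleGraph

theorem homDensity_congr {W W' V : Type*} {F : SimpleGraph W} {F' : SimpleGraph W'}
    (e : F ≃g F') (G : SimpleGraph V) : homDensity F G = homDensity F' G := by
  rw [homDensity, homDensity, Nat.card_congr (e.homCongr .refl), Nat.card_congr e.toEquiv]

theorem stmt9_general (V : ℕ → Type) [∀ n, Finite (V n)]
    (G : ∀ n, SimpleGraph (V n)) :
    (∀ (W : Type) (_ : Finite W) (F : SimpleGraph W),
      ∃ r : ℝ, Tendsto (fun n => homDensity F (G n)) atTop (𝓝 r)) ↔
    (∀ (p : ℕ) (φ : Language.graph.Formula (Fin p)), φ.IsQF → NoEq φ →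
      ∃ r : ℝ, Tendsto
        (fun n => letI := (G n).structure; stonePairing Language.graph (V n) φ)
        atTop (𝓝 r)) := by
  constructor
  · intro hhom p φ hqf hne
    obtain ⟨c, hc⟩ := exists_stonePairing_eq_sum_homDensity φ hqf hne
    choose r hr using fun S : SimpleGraph (Fin p) => hhom (Fin p) inferInstance S
    exact ⟨∑ S, c S * r S, (tendsto_finsetSum _ fun S _ => (hr S).const_mul (c S)).congr
      fun n => (hc _ (G n)).symm⟩
  · intro hstone W _ F
    let F' := F.map (Finite.equivFin W).toEmbedding
    obtain ⟨r, hr⟩ := hstone _ F'.edgeFormula F'.isQF_edgeFormula F'.noEq_edgeFormula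
    refine ⟨r, hr.congr fun n => ?_⟩
    rw [F'.stonePairing_edgeFormula]
    exact (homDensity_congr (SimpleGraph.Iso.map _ F) _).symm

/-- for a sequence of finite nonempty simple graphs, convergence of all
homomorphism densities (left-convergence) is equivalent to convergence of the Stone
pairings of all quantifier-free formulas not using equality. -/
theorem stmt9 (V : ℕ → Type) [∀ n, Finite (V n)] [∀ n, Nonempty (V n)]
    (G : ∀ n, SimpleGraph (V n)) :
    (∀ (W : Type) (_ : Finite W) (F : SimpleGraph W),
      ∃ r : ℝ, Tendsto (fun n => homDensity F (G n)) atTop (𝓝 r)) ↔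
    (∀ (p : ℕ) (φ : Language.graph.Formula (Fin p)), φ.IsQF → NoEq φ →
      ∃ r : ℝ, Tendsto
        (fun n => letI := (G n).structure; stonePairing Language.graph (V n) φ)
        atTop (𝓝 r)) :=
  stmt9_general V G
end

section
/- Let F_1,…,F_ℓ be pairwise non-isomorphic finite simple graphs and let a_1,…,a_ℓ be real numbers such that Σ_{i=1}^ℓ a_i · hom(F_i,G) = 0 for every finite simple graph G. Then a_1 = a_2 = … = a_ℓ = 0; that is, the graph parameters hom(F,·), for F ranging over pairwise non-isomorphic finite simple graphs, are linearly independent. -/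
open Filter Topology

/-!
Grouping the homomorphisms `F → G` by their kernels gives `hom(F, G) = ∑ₛ copy(F/s, G)`, where
`s` runs over the partitions of `V(F)` into independent sets and `copy` counts injective
homomorphisms. A copy of `H` in `H'` with `|V(H)| + |E(H)| ≥ |V(H')| + |E(H')|` is an isomorphism,
so the matrix of copy counts between non-isomorphic graphs is triangular, and in any vanishing
combination of copy counts the coefficients of each isomorphism class sum to zero. If `a_i ≠ 0`
with `|V(F_i)|` maximal, then every quotient `F_k/s ≅ F_i` with `a_k ≠ 0` has `|V(F_k)| ≤ |V(F_i)|`,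
so `s` is discrete and `k = i`: the class of `F_i` has total coefficient `a_i`, a contradiction.
-/

open Function

instance Setoid.finite {α : Type*} [Finite α] : Finite (Setoid α) :=
  Finite.of_injective (fun s : Setoid α => (s.r : α → α → Prop)) fun _ _ h =>
    Setoid.ext fun x y => by simp only at h; rw [h]

theorem Setoid.eq_bot_of_card_le_card_quotient {α : Type*} [Finite α] {s : Setoid α}
    (h : Nat.card α ≤ Nat.card (Quotient s)) : s = ⊥ := by
  rw [← Setoid.ker_mk_eq s, ← Setoid.injective_iff_ker_bot]
  exact (Quotient.mk_surjective.bijective_of_nat_card_le h).1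

namespace SimpleGraph

variable {α β γ : Type*} {A : SimpleGraph α} {B : SimpleGraph β} {C : SimpleGraph γ}

instance Copy.finite [Finite α] [Finite β] : Finite (Copy A B) :=
  Finite.of_injective _ DFunLike.coe_injective

theorem card_copy_congr_left (e : A ≃g B) : Nat.card (Copy A C) = Nat.card (Copy B C) :=
  Nat.card_congr
    { toFun f := f.comp e.symm.toCopy
      invFun f := f.comp e.toCopy
      left_inv f := Copy.ext fun _ => by simp [Copy.comp_apply]
      right_inv f := Copy.ext fun _ => by simp [Copy.comp_apply] }

theorem card_copy_self_pos [Finite α] (A : SimpleGraph α) : 0 < Nat.card (Copy A A) :=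
  have : Nonempty (Copy A A) := ⟨.id A⟩
  Nat.card_pos

noncomputable def Copy.toIso (f : Copy A B) (hv : Bijective f) (he : Surjective f.mapEdgeSet) :
    A ≃g B where
  toEquiv := .ofBijective f hv
  map_rel_iff' {u v} := by
    refine ⟨fun huv => ?_, fun huv => f.toHom.map_adj huv⟩
    obtain ⟨⟨e, he⟩, hfe⟩ := he ⟨s(f u, f v), huv⟩
    have : Sym2.map f e = Sym2.map f s(u, v) := congrArg Subtype.val hfe
    rwa [Sym2.map.injective f.injective this] at he

theorem Copy.nonempty_iso_of_card_le [Finite β] (f : Copy A B)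
    (h : Nat.card β + Nat.card B.edgeSet ≤ Nat.card α + Nat.card A.edgeSet) :
    Nonempty (A ≃g B) := by
  have hv := Nat.card_le_card_of_injective f f.injective
  have he := Nat.card_le_card_of_injective f.mapEdgeSet f.mapEdgeSet.injective
  exact ⟨f.toIso (f.injective.bijective_of_nat_card_le (by omega))
    (f.mapEdgeSet.injective.bijective_of_nat_card_le (by omega)).2⟩

section Quotient

variable (A) in
def quotient (s : Setoid α) : SimpleGraph (Quotient s) where
  Adj x y := x ≠ y ∧ ∃ u v, A.Adj u v ∧ Quotient.mk s u = x ∧ Quotient.mk s v = y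
  symm := ⟨fun _ _ ⟨hne, u, v, huv, hu, hv⟩ => ⟨hne.symm, v, u, huv.symm, hv, hu⟩⟩
  loopless := ⟨fun _ h => h.1 rfl⟩

variable (A) in
abbrev IndepSetoid : Type _ := {s : Setoid α // ∀ ⦃u v⦄, A.Adj u v → ¬ s u v}

def Hom.ker (f : A →g B) : A.IndepSetoid :=
  ⟨Setoid.ker f, fun _ _ huv => B.ne_of_adj (f.map_adj huv)⟩

variable (A) in
def quotientBotIso : A.quotient ⊥ ≃g A where
  toEquiv := Setoid.quotientBotEquiv
  map_rel_iff' {x y} := by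
    induction x using Quotient.ind with | _ u =>
    induction y using Quotient.ind with | _ v =>
    refine ⟨fun huv => ⟨fun h => A.ne_of_adj huv (Quotient.exact h), u, v, huv, rfl, rfl⟩, ?_⟩
    rintro ⟨-, u', v', huv, hu, hv⟩
    rwa [← Quotient.exact hu, ← Quotient.exact hv]

def homFiberEquivCopy (s : A.IndepSetoid) :
    {f : A →g B // f.ker = s} ≃ Copy (A.quotient s.1) B where
  toFun f :=
    have hker : Setoid.ker f.1 = s.1 := congrArg Subtype.val f.2
    ⟨⟨Quotient.lift f.1 fun _ _ h => Setoid.ker_def.1 (hker ▸ h), by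
        rintro _ _ ⟨-, u, v, huv, rfl, rfl⟩
        exact f.1.map_adj huv⟩,
      (Setoid.lift_injective_iff_ker_eq_of_le _).2 hker⟩
  invFun c := ⟨c.toHom.comp ⟨Quotient.mk s.1, fun {u v} huv =>
      ⟨fun h => s.2 huv (Quotient.exact h), u, v, huv, rfl, rfl⟩⟩,
    Subtype.ext <| Setoid.ext fun _ _ => c.injective.eq_iff.trans Quotient.eq⟩
  left_inv _ := rfl
  right_inv c := Copy.ext <| Quotient.ind fun _ => rfl

theorem card_hom_eq_sum_card_copy [Finite α] [Finite β] [Fintype A.IndepSetoid] :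
    Nat.card (A →g B) = ∑ s : A.IndepSetoid, Nat.card (Copy (A.quotient s.1) B) := by
  rw [← Nat.card_congr (Equiv.sigmaFiberEquiv Hom.ker), Nat.card_sigma]
  exact Finset.sum_congr rfl fun s _ => Nat.card_congr (homFiberEquivCopy s)

end Quotient

section LinearIndependence

variable {ι : Type*} [Fintype ι] {V : ι → Type*} [∀ i, Finite (V i)] {H : ∀ i, SimpleGraph (V i)}
  {c : ι → ℝ}

/-- Evaluating at a graph `H j` with `c j ≠ 0` and `|V| + |E|` minimal, only the copies of `H j`
itself survive. -/
theorem eq_zero_of_sum_mul_card_copy_eq_zero (hH : ∀ i j, i ≠ j → IsEmpty (H i ≃g H j))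
    (hc : ∀ j, ∑ i, c i * Nat.card (Copy (H i) (H j)) = 0) (i : ι) : c i = 0 := by
  classical
  by_contra hci
  obtain ⟨j, hj, hmin⟩ := (Finset.univ.filter (c · ≠ 0)).exists_min_image
    (fun k => Nat.card (V k) + Nat.card (H k).edgeSet) ⟨i, by simpa using hci⟩
  simp only [Finset.mem_filter, Finset.mem_univ, true_and] at hj hmin
  have hcj := hc j
  rw [Finset.sum_eq_single j (fun k _ hkj => ?_) (by simp)] at hcj
  · exact hj (by simpa [(card_copy_self_pos (H j)).ne'] using hcj)
  by_cases hk : c k = 0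
  · simp [hk]
  have : IsEmpty (Copy (H k) (H j)) :=
    ⟨fun f => (hH k j hkj).false (f.nonempty_iso_of_card_le (hmin k hk)).some⟩
  simp

open scoped Classical in
theorem sum_iso_class_eq_zero (hc : ∀ j, ∑ i, c i * Nat.card (Copy (H i) (H j)) = 0) (j : ι) :
    ∑ i with Nonempty (H i ≃g H j), c i = 0 := by
  let S : Setoid ι := ⟨fun i k => Nonempty (H i ≃g H k),
    ⟨fun _ => ⟨.refl⟩, fun ⟨e⟩ => ⟨e.symm⟩, fun ⟨e⟩ ⟨e'⟩ => ⟨e'.comp e⟩⟩⟩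
  have hout (i : ι) (q : Quotient S) (hi : Quotient.mk S i = q) : Nonempty (H i ≃g H q.out) :=
    Quotient.exact (hi.trans q.out_eq.symm)
  have key := eq_zero_of_sum_mul_card_copy_eq_zero (H := fun q : Quotient S => H q.out)
    (c := fun q => ∑ i with Quotient.mk S i = q, c i) ?_ ?_ (Quotient.mk S j)
  · simp only [Quotient.eq] at key
    convert key using 2; rfl
  · exact fun q q' hne => ⟨fun e => hne (by rw [← q.out_eq, ← q'.out_eq]; exact Quotient.sound ⟨e⟩)⟩
  · intro q'
    rw [← hc q'.out, ← Finset.sum_fiberwise Finset.univ (Quotient.mk S)]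
    refine Finset.sum_congr rfl fun q _ => ?_
    rw [Finset.sum_mul]
    refine Finset.sum_congr rfl fun i hi => ?_
    rw [card_copy_congr_left (hout i q (Finset.mem_filter.1 hi).2).some]

end LinearIndependence

end SimpleGraph

open SimpleGraph

/-- the parameters hom(F,·) for pairwise non-isomorphic finite simple graphs F
are linearly independent. -/
theorem stmt10 (ℓ : ℕ) (V : Fin ℓ → Type) [∀ i, Finite (V i)]
    (F : ∀ i, SimpleGraph (V i))
    (hni : ∀ i j, i ≠ j → IsEmpty (F i ≃g F j))
    (a : Fin ℓ → ℝ)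
    (h : ∀ (U : Type) [Finite U] (G : SimpleGraph U),
      ∑ i, a i * (Nat.card (F i →g G) : ℝ) = 0) :
    ∀ i, a i = 0 := by
  classical
  have (i : Fin ℓ) : Fintype (F i).IndepSetoid := Fintype.ofFinite _
  let H (p : Σ i, (F i).IndepSetoid) := (F p.1).quotient p.2.1
  have hclass := sum_iso_class_eq_zero (H := H) (c := fun p => a p.1) fun q => by
    rw [← h _ (H q), Fintype.sum_sigma]
    simp only [H, card_hom_eq_sum_card_copy, Nat.cast_sum, Finset.mul_sum]
  by_contra! ⟨i₀, hi₀⟩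
  obtain ⟨i, hi, hmax⟩ := (Finset.univ.filter (a · ≠ 0)).exists_max_image (fun k => Nat.card (V k))
    ⟨i₀, by simpa using hi₀⟩
  simp only [Finset.mem_filter, Finset.mem_univ, true_and] at hi hmax
  let bot : (F i).IndepSetoid := ⟨⊥, fun _ _ => (F i).ne_of_adj⟩
  have hsum := hclass ⟨i, bot⟩
  rw [Finset.sum_eq_single_of_mem ⟨i, bot⟩ (by simpa using ⟨Iso.refl⟩) ?_] at hsum
  · exact hi hsum
  rintro ⟨k, t, _⟩ hkt hne
  obtain ⟨e⟩ := (Finset.mem_filter.1 hkt).2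
  by_contra hk
  have hcard : Nat.card (V k) ≤ Nat.card (Quotient t) :=
    (hmax k hk).trans (Nat.card_congr (e.trans (quotientBotIso _)).toEquiv).ge
  obtain rfl := Setoid.eq_bot_of_card_le_card_quotient hcard
  obtain rfl : k = i := by_contra fun hki =>
    (hni k i hki).false (((quotientBotIso _).symm.trans e).trans (quotientBotIso _))
  exact hne rfl
end

section
/- Let f : {finite nonempty simple graphs} → ℝ be a function of the form f(G) = Σ_{i=1}^ℓ a_i · t(F_i,G) for finite simple graphs F_1,…,F_ℓ and reals a_1,…,a_ℓ. Then f(G) ≥ 0 for every finite nonempty simple graph G if and only if for every ε > 0 there exists a function h of the same form, h(G) = Σ_{j=1}^m b_j · t(H_j,G), such that h(G) ≥ 0 for every finite nonempty simple graph G and sup_G |f(G) − h(G)²| < ε (the supremum over all finite nonempty simple graphs G). -/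
open Filter Topology

/-!
Densities of finite graphs are closed under products (disjoint unions) and contain `1` (the empty
graph), so their real span is a subalgebra of graph parameters and is closed under substitution
into polynomials. If `f ≥ 0` is such a combination, it takes values in `[0, M]` with
`M = ∑ |aᵢ|`; by Weierstrass a polynomial `q` approximates `√·` on `[0, M]` from above, and
`h = q ∘ f` is then a nonnegative quantum graph with `h² ≈ f` uniformly. Conversely `f ≥ h² - ε`
for every `ε`.
-/

open Polynomial

namespace SimpleGraph

variable {V W W₁ W₂ : Type*}

def Hom.sumEquiv (F₁ : SimpleGraph W₁) (F₂ : SimpleGraph W₂) (G : SimpleGraph V) :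
    (F₁ ⊕g F₂ →g G) ≃ (F₁ →g G) × (F₂ →g G) where
  toFun f := (f.comp Embedding.sumInl.toHom, f.comp Embedding.sumInr.toHom)
  invFun f := ⟨Sum.elim f.1 f.2, by
    rintro (u | u) (v | v) h
    · exact f.1.map_rel h
    · simp at h
    · simp at h
    · exact f.2.map_rel h⟩
  left_inv f := by ext (u | u) <;> rfl
  right_inv f := rfl

end SimpleGraph

open SimpleGraph

section homDensity

variable {V W W₁ W₂ : Type*}

theorem homDensity_nonneg (F : SimpleGraph W) (G : SimpleGraph V) : 0 ≤ homDensity F G := by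
  unfold homDensity
  positivity

theorem homDensity_le_one [Finite W] [Finite V] [Nonempty V]
    (F : SimpleGraph W) (G : SimpleGraph V) : homDensity F G ≤ 1 := by
  have hcard : Nat.card (F →g G) ≤ Nat.card V ^ Nat.card W := by
    simpa only [Nat.card_fun] using
      Nat.card_le_card_of_injective _ (DFunLike.coe_injective (F := F →g G))
  have hV : 0 < Nat.card V := Nat.card_pos
  rw [homDensity, div_le_one (by positivity)]
  exact_mod_cast hcard

theorem homDensity_sum [Finite W₁] [Finite W₂]
    (F₁ : SimpleGraph W₁) (F₂ : SimpleGraph W₂) (G : SimpleGraph V) :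
    homDensity (F₁ ⊕g F₂) G = homDensity F₁ G * homDensity F₂ G := by
  simp only [homDensity, Nat.card_congr (Hom.sumEquiv F₁ F₂ G), Nat.card_prod, Nat.card_sum,
    Nat.cast_mul, pow_add, mul_div_mul_comm]

theorem homDensity_of_isEmpty [IsEmpty W] (F : SimpleGraph W) (G : SimpleGraph V) :
    homDensity F G = 1 := by
  simp [homDensity]

end homDensity

/- Graph parameters are evaluated on all graphs: `homDensity_sum` and `homDensity_of_isEmpty` hold
also for empty or infinite `V` (where `Nat.card V = 0`), so densities form a submonoid outright. -/
abbrev GraphParam : Type 1 := (Σ V : Type, SimpleGraph V) → ℝ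

noncomputable def densityParam {W : Type} (F : SimpleGraph W) : GraphParam :=
  fun G => homDensity F G.2

def densityMonoid : Submonoid GraphParam where
  carrier := {φ | ∃ (W : Type) (_ : Finite W) (F : SimpleGraph W), densityParam F = φ}
  one_mem' := ⟨Empty, inferInstance, ⊥, funext fun G => homDensity_of_isEmpty _ G.2⟩
  mul_mem' := by
    rintro _ _ ⟨W₁, _, F₁, rfl⟩ ⟨W₂, _, F₂, rfl⟩
    exact ⟨W₁ ⊕ W₂, inferInstance, F₁ ⊕g F₂, funext fun G => homDensity_sum F₁ F₂ G.2⟩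

def quantumGraphAlgebra : Subalgebra ℝ GraphParam := Algebra.adjoin ℝ densityMonoid

theorem densityParam_mem_quantumGraphAlgebra {W : Type} [Finite W] (F : SimpleGraph W) :
    densityParam F ∈ quantumGraphAlgebra :=
  Algebra.subset_adjoin ⟨W, inferInstance, F, rfl⟩

theorem exists_sum_homDensity_of_mem_quantumGraphAlgebra {f : GraphParam}
    (hf : f ∈ quantumGraphAlgebra) :
    ∃ (m : ℕ) (X : Fin m → Type) (_ : ∀ j, Finite (X j)) (H : ∀ j, SimpleGraph (X j))
      (b : Fin m → ℝ), ∀ G, f G = ∑ j, b j * homDensity (H j) G.2 := by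
  rw [quantumGraphAlgebra, ← Subalgebra.mem_toSubmodule, Algebra.adjoin_eq_span,
    Submonoid.closure_eq, Submodule.mem_span_set'] at hf
  obtain ⟨m, b, φ, rfl⟩ := hf
  choose X hX H hH using fun j => (φ j).2
  refine ⟨m, X, hX, H, b, fun G => ?_⟩
  simp [← hH, densityParam]

theorem aeval_mem_quantumGraphAlgebra (p : ℝ[X]) {f : GraphParam}
    (hf : f ∈ quantumGraphAlgebra) : aeval f p ∈ quantumGraphAlgebra :=
  aeval_subalgebra_coe p quantumGraphAlgebra ⟨f, hf⟩ ▸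
    (aeval (⟨f, hf⟩ : quantumGraphAlgebra) p).2

theorem sum_mul_homDensity_le_sum_abs {ι V : Type*} [Fintype ι] {W : ι → Type*}
    [∀ i, Finite (W i)] [Finite V] [Nonempty V] (a : ι → ℝ) (F : ∀ i, SimpleGraph (W i))
    (G : SimpleGraph V) : ∑ i, a i * homDensity (F i) G ≤ ∑ i, |a i| := by
  gcongr with i
  calc a i * homDensity (F i) G ≤ |a i| * homDensity (F i) G := by
        gcongr
        · exact homDensity_nonneg _ _
        · exact le_abs_self _
    _ ≤ |a i| := mul_le_of_le_one_right (abs_nonneg _) (homDensity_le_one _ _)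

theorem exists_polynomial_nonneg_sq_near (M : ℝ) {ε : ℝ} (hε : 0 < ε) :
    ∃ q : ℝ[X], ∀ x ∈ Set.Icc 0 M, 0 ≤ q.eval x ∧ |x - q.eval x ^ 2| < ε := by
  set δ := min 1 (ε / (4 * √M + 5))
  have hδ : 0 < δ := lt_min one_pos (by positivity)
  obtain ⟨p, hp⟩ := exists_polynomial_near_of_continuousOn 0 M Real.sqrt
    Real.continuous_sqrt.continuousOn δ hδ
  refine ⟨p + C δ, fun x hx => ?_⟩
  have hq : (p + C δ).eval x = p.eval x + δ := by simp
  have hpx := abs_lt.1 (hp x hx)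
  have hlow : √x ≤ (p + C δ).eval x := by linarith
  have hhigh : (p + C δ).eval x ≤ √x + 2 * δ := by linarith
  have hsqrt : 0 ≤ √x := Real.sqrt_nonneg x
  have hx_eq : x = √x ^ 2 := (Real.sq_sqrt hx.1).symm
  refine ⟨hsqrt.trans hlow, ?_⟩
  have hx_le : x ≤ (p + C δ).eval x ^ 2 := hx_eq.trans_le (pow_le_pow_left₀ hsqrt hlow 2)
  rw [abs_sub_comm, abs_of_nonneg (sub_nonneg.2 hx_le)]
  calc (p + C δ).eval x ^ 2 - x ≤ (√x + 2 * δ) ^ 2 - √x ^ 2 := by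
        rw [← hx_eq]; gcongr; exact hsqrt.trans hlow
    _ = 4 * δ * √x + 4 * δ * δ := by ring
    _ ≤ 4 * δ * √M + 4 * δ * 1 := by gcongr; exacts [hx.2, min_le_left _ _]
    _ < (4 * √M + 5) * δ := by linarith
    _ ≤ ε := (le_div_iff₀' (by positivity)).1 (min_le_right _ _)

/-- a finite linear combination of homomorphism densities is nonnegative on all
finite nonempty simple graphs iff it can be approximated, uniformly within every ε > 0, by
squares of nonnegative finite linear combinations of homomorphism densities. -/
theorem stmt14 (ℓ : ℕ) (W : Fin ℓ → Type) (hW : ∀ i, Finite (W i))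
    (F : ∀ i, SimpleGraph (W i)) (a : Fin ℓ → ℝ) :
    (∀ (U : Type) [Finite U] [Nonempty U] (G : SimpleGraph U),
        0 ≤ ∑ i, a i * homDensity (F i) G) ↔
    (∀ ε : ℝ, 0 < ε →
      ∃ (m : ℕ) (X : Fin m → Type) (_ : ∀ j, Finite (X j))
        (H : ∀ j, SimpleGraph (X j)) (b : Fin m → ℝ),
        (∀ (U : Type) [Finite U] [Nonempty U] (G : SimpleGraph U),
          0 ≤ ∑ j, b j * homDensity (H j) G) ∧
        (∀ (U : Type) [Finite U] [Nonempty U] (G : SimpleGraph U),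
          |(∑ i, a i * homDensity (F i) G) - (∑ j, b j * homDensity (H j) G) ^ 2| < ε)) := by
  constructor
  · intro hf ε hε
    obtain ⟨q, hq⟩ := exists_polynomial_nonneg_sq_near (∑ i, |a i|) hε
    set f : GraphParam := ∑ i, a i • densityParam (F i)
    have hfA : f ∈ quantumGraphAlgebra := Subalgebra.sum_mem _ fun i _ =>
      Subalgebra.smul_mem _ (densityParam_mem_quantumGraphAlgebra (F i)) (a i)
    obtain ⟨m, X, hX, H, b, hb⟩ :=
      exists_sum_homDensity_of_mem_quantumGraphAlgebra (aeval_mem_quantumGraphAlgebra q hfA)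
    have hbq : ∀ (U : Type) (G : SimpleGraph U),
        ∑ j, b j * homDensity (H j) G = q.eval (∑ i, a i * homDensity (F i) G) := by
      intro U G
      simp [← hb ⟨U, G⟩, f, densityParam]
    have hf_mem : ∀ (U : Type) [Finite U] [Nonempty U] (G : SimpleGraph U),
        ∑ i, a i * homDensity (F i) G ∈ Set.Icc 0 (∑ i, |a i|) :=
      fun U _ _ G => ⟨hf U G, sum_mul_homDensity_le_sum_abs a F G⟩
    refine ⟨m, X, hX, H, b, fun U _ _ G => ?_, fun U _ _ G => ?_⟩
    · rw [hbq]
      exact (hq _ (hf_mem U G)).1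
    · rw [hbq]
      exact (hq _ (hf_mem U G)).2
  · intro happrox U _ _ G
    by_contra! hneg
    obtain ⟨m, X, -, H, b, -, hclose⟩ := happrox _ (neg_pos.2 hneg)
    linarith [abs_lt.1 (hclose U G), sq_nonneg (∑ j, b j * homDensity (H j) G)]
end
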